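/- Greedy constrained decoding terminates at a valid query: if 𝒬 is a nonempty finite antichain under the prefix order and at each step one extends the current prefix by any token in M(s) (which is always possible while s ∉ 𝒬), then the process terminates after at most max_{Q ∈ 𝒬} |Q| steps with a sequence in 𝒬. -/
import Mathlib

def validNext {V : Type*} (𝒬 : Finset (List V)) (s : List V) (t : V) : Prop :=
  ∃ Q ∈ 𝒬, (s ++ [t]) <+: Q

/-- Greedy constrained decoding terminates at a valid query: if `𝒬` is a nonempty finite
antichain under the prefix order and at each step the current prefix is extended by some
valid next token (while not yet a member of `𝒬`), then the process reaches a member of `𝒬`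
within `max_{Q ∈ 𝒬} |Q|` steps. -/
theorem stmt_9 {V : Type*} [Fintype V] (𝒬 : Finset (List V)) (h𝒬 : 𝒬.Nonempty)
    (hanti : ∀ Q₁ ∈ 𝒬, ∀ Q₂ ∈ 𝒬, Q₁ <+: Q₂ → Q₁ = Q₂)
    (s : ℕ → List V) (h0 : s 0 = [])
    (hstep : ∀ k, s k ∉ 𝒬 → ∃ t, validNext 𝒬 (s k) t ∧ s (k + 1) = s k ++ [t]) :
    ∃ k ≤ 𝒬.sup List.length, s k ∈ 𝒬 := by
  set N := 𝒬.sup List.length with hN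
  by_contra h
  push_neg at h
  have key : ∀ k ≤ N, (s k).length = k ∧ ∃ Q ∈ 𝒬, s k <+: Q := by
    intro k
    induction k with
    | zero =>
      intro _
      obtain ⟨Q, hQ⟩ := h𝒬
      exact ⟨by simp [h0], Q, hQ, by simp [h0]⟩
    | succ k ih =>
      intro hk1
      have hk : k ≤ N := Nat.le_of_succ_le hk1
      obtain ⟨hlen, _⟩ := ih hk
      obtain ⟨t, ⟨Q, hQ, hpre⟩, heq⟩ := hstep k (h k hk)
      refine ⟨by simp [heq, hlen], Q, hQ, heq ▸ hpre⟩
  obtain ⟨hlen, Q, hQ, hpre⟩ := key N le_rfl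
  have hQlen : Q.length ≤ N := Finset.le_sup hQ
  have : s N = Q := hpre.eq_of_length_le (by omega)
  exact h N le_rfl (this ▸ hQ)
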